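/- arXiv:1005.0879 — 4 statements merged into one kernel-verified Lean document; each statement's English description precedes it below -/
import Mathlib

section
/- Let n be a positive integer. The order of the permutation σ of {1, 2, …, 2n} is 2n if n is odd, and n if n is even. -/
/-- The transposition product `τ = (1 2)(3 4)⋯(2n−1 2n)` on coordinates, written
`0`-based on `Fin (2n)`: it swaps `2a ↔ 2a+1`. -/
def tauFn (n : ℕ) (j : Fin (2 * n)) : Fin (2 * n) :=
  ⟨if j.val % 2 = 0 then j.val + 1 else j.val - 1, by have h := j.isLt; split <;> omega⟩

lemma tauFn_involutive (n : ℕ) : Function.Involutive (tauFn n) := by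
  intro j
  apply Fin.ext
  simp only [tauFn]
  split <;> split <;> omega

/-- `τ` as a permutation of `Fin (2n)`. -/
def tauPerm (n : ℕ) : Equiv.Perm (Fin (2 * n)) :=
  Function.Involutive.toPerm (tauFn n) (tauFn_involutive n)

/-- The cyclic shift `T : i ↦ i + 1 (mod 2n)` as a permutation of `Fin (2n)`. -/
def TPerm (n : ℕ) [NeZero n] : Equiv.Perm (Fin (2 * n)) :=
  Equiv.addRight (1 : Fin (2 * n))

/-- The permutation `σ = τ ∘ T²` of `Fin (2n)`. -/
def sigmaPerm (n : ℕ) [NeZero n] : Equiv.Perm (Fin (2 * n)) :=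
  tauPerm n * (TPerm n) ^ 2

lemma sigma_apply_val (n : ℕ) [NeZero n] (x : Fin (2 * n)) :
    ((sigmaPerm n) x).val = (x.val + (if x.val % 2 = 0 then 3 else 1)) % (2 * n) := by
  have hn : 0 < n := Nat.pos_of_ne_zero (NeZero.ne n)
  have hx := x.isLt
  have h1 : ((1 : Fin (2 * n))).val = 1 := by
    simp [Fin.val_one, Nat.mod_eq_of_lt (by omega : 1 < 2 * n)]
  have hT : ((TPerm n ^ 2) x).val = (x.val + 2) % (2 * n) := by
    show ((TPerm n) ((TPerm n) x)).val = _
    simp only [TPerm, Equiv.coe_addRight, Fin.add_def, h1]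
    rw [Nat.mod_add_mod]
  show (tauFn n ((TPerm n ^ 2) x)).val = _
  simp only [tauFn, hT]
  have hp : (x.val + 2) % (2 * n) % 2 = x.val % 2 := by
    have := Nat.mod_mod_of_dvd (x.val + 2) (⟨n, rfl⟩ : 2 ∣ 2 * n)
    omega
  have hlt : (x.val + 2) % (2 * n) < 2 * n := Nat.mod_lt _ (by omega)
  have hsub : x.val + 2 < 2 * n ∧ (x.val + 2) % (2 * n) = x.val + 2 ∨ 2 * n ≤ x.val + 2 ∧
      (x.val + 2) % (2 * n) = x.val + 2 - 2 * n := by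
    rcases Nat.lt_or_ge (x.val + 2) (2 * n) with h | h
    · exact Or.inl ⟨h, Nat.mod_eq_of_lt h⟩
    · exact Or.inr ⟨h, by rw [Nat.mod_eq_sub_mod h, Nat.mod_eq_of_lt (by omega)]⟩
  rcases Nat.even_or_odd x.val with he | ho
  · have hx2 : x.val % 2 = 0 := Nat.even_iff.mp he
    simp only [hx2, hp, if_pos rfl, if_true]
    have hsub3 : x.val + 3 < 2 * n ∧ (x.val + 3) % (2 * n) = x.val + 3 ∨ 2 * n ≤ x.val + 3 ∧
        (x.val + 3) % (2 * n) = x.val + 3 - 2 * n := by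
      rcases Nat.lt_or_ge (x.val + 3) (2 * n) with h | h
      · exact Or.inl ⟨h, Nat.mod_eq_of_lt h⟩
      · exact Or.inr ⟨h, by rw [Nat.mod_eq_sub_mod h, Nat.mod_eq_of_lt (by omega)]⟩
    omega
  · have hx2 : x.val % 2 = 1 := Nat.odd_iff.mp ho
    simp only [hx2, hp]
    norm_num
    have hge : 1 ≤ (x.val + 2) % (2 * n) := by omega
    have hsub1 : x.val + 1 < 2 * n ∧ (x.val + 1) % (2 * n) = x.val + 1 ∨ 2 * n ≤ x.val + 1 ∧
        (x.val + 1) % (2 * n) = x.val + 1 - 2 * n := by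
      rcases Nat.lt_or_ge (x.val + 1) (2 * n) with h | h
      · exact Or.inl ⟨h, Nat.mod_eq_of_lt h⟩
      · exact Or.inr ⟨h, by rw [Nat.mod_eq_sub_mod h, Nat.mod_eq_of_lt (by omega)]⟩
    omega

lemma sigma_pow_apply_val (n : ℕ) [NeZero n] (k : ℕ) (x : Fin (2 * n)) :
    ((sigmaPerm n ^ k) x).val =
      (x.val + 2 * k +
        (if k % 2 = 0 then 0 else if x.val % 2 = 0 then 1 else 2 * n - 1)) % (2 * n) := by
  have hn : 0 < n := Nat.pos_of_ne_zero (NeZero.ne n)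
  induction k with
  | zero => simp [Nat.mod_eq_of_lt x.isLt]
  | succ k ih =>
    have hstep : ((sigmaPerm n ^ (k + 1)) x) = sigmaPerm n ((sigmaPerm n ^ k) x) := by
      rw [pow_succ']
      exact Equiv.Perm.mul_apply _ _ _
    rw [hstep, sigma_apply_val, ih]
    have hmm : ∀ a : ℕ, a % (2 * n) % 2 = a % 2 := fun a =>
      Nat.mod_mod_of_dvd a ⟨n, rfl⟩
    rcases Nat.even_or_odd k with hk | hk
    · have hk2 : k % 2 = 0 := Nat.even_iff.mp hk
      have hk2' : ¬ (k + 1) % 2 = 0 := by omega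
      simp only [if_pos hk2, if_neg hk2', Nat.add_zero]
      rcases Nat.even_or_odd x.val with hx | hx
      · have hx2 : x.val % 2 = 0 := Nat.even_iff.mp hx
        have hpar : (x.val + 2 * k) % (2 * n) % 2 = 0 := by rw [hmm]; omega
        rw [if_pos hpar, if_pos hx2, Nat.mod_add_mod]
        congr 1
      · have hx2 : ¬ x.val % 2 = 0 := by have := Nat.odd_iff.mp hx; omega
        have hpar : ¬ (x.val + 2 * k) % (2 * n) % 2 = 0 := by rw [hmm]; omega
        rw [if_neg hpar, if_neg hx2, Nat.mod_add_mod]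
        have he : x.val + 2 * (k + 1) + (2 * n - 1) = (x.val + 2 * k + 1) + 2 * n := by
          omega
        rw [he, Nat.add_mod_right]
    · have hk2 : ¬ k % 2 = 0 := by have := Nat.odd_iff.mp hk; omega
      have hk2' : (k + 1) % 2 = 0 := by omega
      simp only [if_neg hk2, if_pos hk2', Nat.add_zero]
      rcases Nat.even_or_odd x.val with hx | hx
      · have hx2 : x.val % 2 = 0 := Nat.even_iff.mp hx
        simp only [if_pos hx2]
        have hpar : ¬ (x.val + 2 * k + 1) % (2 * n) % 2 = 0 := by rw [hmm]; omega
        rw [if_neg hpar, Nat.mod_add_mod]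
        congr 1
      · have hx2 : ¬ x.val % 2 = 0 := by have := Nat.odd_iff.mp hx; omega
        simp only [if_neg hx2]
        have hpar : (x.val + 2 * k + (2 * n - 1)) % (2 * n) % 2 = 0 := by rw [hmm]; omega
        rw [if_pos hpar, Nat.mod_add_mod]
        have he : x.val + 2 * k + (2 * n - 1) + 3 = (x.val + 2 * (k + 1)) + 2 * n := by
          omega
        rw [he, Nat.add_mod_right]

lemma sigma_pow_eq_one_iff (n : ℕ) [NeZero n] (k : ℕ) :
    sigmaPerm n ^ k = 1 ↔ (k % 2 = 0 ∧ n ∣ k) := by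
  have hn : 0 < n := Nat.pos_of_ne_zero (NeZero.ne n)
  constructor
  · intro h
    have h0 : ((sigmaPerm n ^ k) (⟨0, by omega⟩ : Fin (2 * n))).val = 0 := by
      rw [h]; rfl
    rw [sigma_pow_apply_val] at h0
    simp only [Nat.zero_mod, Nat.zero_add, reduceIte] at h0
    rcases Nat.even_or_odd k with hk | hk
    · have hk2 : k % 2 = 0 := Nat.even_iff.mp hk
      rw [if_pos hk2, Nat.add_zero] at h0
      have hd : 2 * n ∣ 2 * k := Nat.dvd_iff_mod_eq_zero.mpr h0
      exact ⟨hk2, (mul_dvd_mul_iff_left (two_ne_zero)).mp hd⟩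
    · have hk2 : ¬ k % 2 = 0 := by have := Nat.odd_iff.mp hk; omega
      rw [if_neg hk2] at h0
      exfalso
      have hd := Nat.mod_mod_of_dvd (2 * k + 1) (⟨n, rfl⟩ : 2 ∣ 2 * n)
      omega
  · rintro ⟨hk2, m, hm⟩
    ext x
    have : ((sigmaPerm n ^ k) x).val = x.val := by
      rw [sigma_pow_apply_val, if_pos hk2, Nat.add_zero, hm]
      have he : x.val + 2 * (n * m) = x.val + (2 * n) * m := by ring
      rw [he, Nat.add_mul_mod_self_left, Nat.mod_eq_of_lt x.isLt]
    simpa [Fin.ext_iff] using this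

/-- For a positive integer `n`, the order of `σ` is `2n` if `n` is
odd and `n` if `n` is even. -/
theorem orderOf_sigmaPerm (n : ℕ) [NeZero n] :
    (Odd n → orderOf (sigmaPerm n) = 2 * n) ∧
    (Even n → orderOf (sigmaPerm n) = n) := by
  have hn : 0 < n := Nat.pos_of_ne_zero (NeZero.ne n)
  have hprop := (sigma_pow_eq_one_iff n (orderOf (sigmaPerm n))).mp
    (pow_orderOf_eq_one (sigmaPerm n))
  constructor
  · intro hodd
    have h1 : sigmaPerm n ^ (2 * n) = 1 :=
      (sigma_pow_eq_one_iff n (2 * n)).mpr ⟨by omega, ⟨2, by ring⟩⟩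
    have hdvd : orderOf (sigmaPerm n) ∣ 2 * n := orderOf_dvd_of_pow_eq_one h1
    have hcop : Nat.Coprime 2 n :=
      (Nat.prime_two.coprime_iff_not_dvd).mpr
        (by have := Nat.odd_iff.mp hodd; omega)
    have h2 : 2 ∣ orderOf (sigmaPerm n) := Nat.dvd_iff_mod_eq_zero.mpr hprop.1
    have hmul : 2 * n ∣ orderOf (sigmaPerm n) :=
      Nat.Coprime.mul_dvd_of_dvd_of_dvd hcop h2 hprop.2
    exact Nat.dvd_antisymm hdvd hmul
  · intro heven
    have h1 : sigmaPerm n ^ n = 1 :=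
      (sigma_pow_eq_one_iff n n).mpr ⟨Nat.even_iff.mp heven, dvd_rfl⟩
    exact Nat.dvd_antisymm (orderOf_dvd_of_pow_eq_one h1) hprop.2
end

section
/- Let n be odd and let C ⊆ F4^n be an F4-linear skew-cyclic code of dimension k and minimum distance d. Then there exists a permutation π of {1, …, 2n} such that the permuted code C' = {(v_{π(1)}, …, v_{π(2n)}) : v ∈ S(C)} is an additive cyclic code of length 2n with 2^{2k} codewords and minimum distance 2d: C' is an additive subgroup of F4^{2n} invariant under the cyclic coordinate shift. -/
abbrev F4 : Type := GaloisField 2 2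
noncomputable instance : Fintype F4 := Fintype.ofFinite _
noncomputable instance : DecidableEq F4 := Classical.decEq _

/-- The map `S : F4^n → F4^{2n}`, sending `(v_0,…,v_{n-1})` to
`(v_0, v_0², v_1, v_1², …, v_{n-1}, v_{n-1}²)` (conjugation on `F4` is squaring). -/
noncomputable def Smap (n : ℕ) (v : Fin n → F4) : Fin (2 * n) → F4 :=
  fun i =>
    if i.val % 2 = 0 then v ⟨i.val / 2, by have h := i.isLt; omega⟩
    else (v ⟨i.val / 2, by have h := i.isLt; omega⟩) ^ 2

/-- The code obtained from `C` by permuting coordinates by `π`: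
`v' = (v_{π(1)}, …, v_{π(m)})` for `v ∈ C`. -/
def permCode {m : ℕ} (π : Equiv.Perm (Fin m)) (C : Set (Fin m → F4)) :
    Set (Fin m → F4) :=
  (fun v => fun i => v (π i)) '' C

/-- The minimum Hamming weight of the nonzero elements of a code, which is the
minimum distance of an additive code. -/
noncomputable def minWt {m : ℕ} (C : Set (Fin m → F4)) : ℕ :=
  sInf {r : ℕ | ∃ v ∈ C, v ≠ 0 ∧ r = hammingNorm v}

/-! For odd `n` the Chinese remainder theorem identifies `Fin (2 * n)` with `Fin n × Fin 2` via
`i ↦ (i mod n, i mod 2)`. Putting at position `i` the coordinate `v (i mod n)`, conjugated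
`i mod 2` times, is a coordinate permutation of `S(v)`; since `i ↦ i - 1` decrements both residues
and conjugation is an involution, it turns the skew shift `v ↦ (v̄ (j - 1))_j` into the cyclic
shift. `S` is additive and doubles Hamming weights (`x̄ = 0` iff `x = 0`), which gives the `4 ^ k`
codewords and the minimum distance `2 d`. -/

open Function

lemma F4_natCard : Nat.card F4 = 4 := by
  rw [GaloisField.card 2 2 two_ne_zero]; norm_num

lemma F4_sq_sq (x : F4) : (x ^ 2) ^ 2 = x := by
  rw [← pow_mul, show 2 * 2 = Fintype.card F4 by rw [Fintype.card_eq_nat_card, F4_natCard]]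
  exact FiniteField.pow_card x

lemma Fin.ofNat_val_add_of_dvd {m n : ℕ} [NeZero n] (h : n ∣ m) (a b : Fin m) :
    Fin.ofNat n (a + b : Fin m) = Fin.ofNat n a + Fin.ofNat n b := by
  ext
  simp [Fin.val_add, Nat.mod_mod_of_dvd _ h]

lemma Fin.ofNat_val_sub_one_of_dvd {m n : ℕ} [NeZero m] [NeZero n] (h : n ∣ m) (i : Fin m) :
    Fin.ofNat n (i - 1 : Fin m) = Fin.ofNat n i - 1 := by
  have hone : Fin.ofNat n (1 : Fin m) = 1 := by
    ext
    simp [Nat.mod_mod_of_dvd _ h]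
  rw [eq_sub_iff_add_eq, ← hone, ← Fin.ofNat_val_add_of_dvd h, sub_add_cancel]

lemma hammingNorm_comp_equiv {ι κ β : Type*} [Fintype ι] [Fintype κ] [Zero β] [DecidableEq β]
    (x : κ → β) (e : ι ≃ κ) : hammingNorm (x ∘ e) = hammingNorm x :=
  Finset.card_equiv e (by simp)

lemma Nat.sInf_image_mul_left (c : ℕ) (S : Set ℕ) : sInf ((c * ·) '' S) = c * sInf S := by
  rcases S.eq_empty_or_nonempty with rfl | hS
  · simp
  · refine le_antisymm (Nat.sInf_le (Set.mem_image_of_mem _ (Nat.sInf_mem hS))) ?_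
    obtain ⟨r, hr, hrS⟩ := Nat.sInf_mem (hS.image (c * ·))
    rw [← hrS]
    exact Nat.mul_le_mul_left c (Nat.sInf_le hr)

lemma minWt_image {m m' : ℕ} {c : ℕ} (hc : c ≠ 0) (f : (Fin m → F4) → (Fin m' → F4))
    (hf : ∀ v, hammingNorm (f v) = c * hammingNorm v) (C : Set (Fin m → F4)) :
    minWt (f '' C) = c * minWt C := by
  have hf0 : ∀ v, f v = 0 ↔ v = 0 := fun v => by
    rw [← hammingNorm_eq_zero, hf, mul_eq_zero, hammingNorm_eq_zero, or_iff_right hc]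
  have hweights : {r | ∃ u ∈ f '' C, u ≠ 0 ∧ r = hammingNorm u}
      = (c * ·) '' {r | ∃ v ∈ C, v ≠ 0 ∧ r = hammingNorm v} := by
    ext r
    constructor
    · rintro ⟨_, ⟨v, hv, rfl⟩, hne, rfl⟩
      exact ⟨hammingNorm v, ⟨v, hv, mt (hf0 v).2 hne, rfl⟩, (hf v).symm⟩
    · rintro ⟨_, ⟨v, hv, hne, rfl⟩, rfl⟩
      exact ⟨f v, ⟨v, hv, rfl⟩, mt (hf0 v).1 hne, (hf v).symm⟩
  rw [minWt, minWt, hweights, Nat.sInf_image_mul_left]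

section interleave

variable {n : ℕ}

lemma Smap_add (v w : Fin n → F4) : Smap n (v + w) = Smap n v + Smap n w := by
  funext i
  simp only [Smap, Pi.add_apply]
  split_ifs <;> simp [add_pow_char]

variable (n) in
/-- `(j, e) ↦ 2 j + e`, the position of `v j` conjugated `e` times in `Smap n v`. -/
def pairIndex : Fin n × Fin 2 ≃ Fin (2 * n) :=
  finProdFinEquiv.trans (finCongr (Nat.mul_comm n 2))

lemma Smap_pairIndex_zero (v : Fin n → F4) (j : Fin n) : Smap n v (pairIndex n (j, 0)) = v j := by
  simp [Smap, pairIndex, finProdFinEquiv]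

lemma Smap_pairIndex_one (v : Fin n → F4) (j : Fin n) :
    Smap n v (pairIndex n (j, 1)) = v j ^ 2 := by
  simp [Smap, pairIndex, finProdFinEquiv, Nat.add_mul_div_left]

lemma hammingNorm_Smap (v : Fin n → F4) : hammingNorm (Smap n v) = 2 * hammingNorm v := by
  have hsupp : ({p | Smap n v (pairIndex n p) ≠ 0} : Finset (Fin n × Fin 2))
      = ({j | v j ≠ 0} : Finset (Fin n)) ×ˢ Finset.univ := by
    ext ⟨j, e⟩
    fin_cases e <;> simp [Smap_pairIndex_zero, Smap_pairIndex_one]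
  rw [← hammingNorm_comp_equiv _ (pairIndex n), hammingNorm, hammingNorm]
  simp only [comp_apply, hsupp, Finset.card_product, Finset.card_univ, Fintype.card_fin, mul_comm]

variable (n) in
noncomputable def permSmap (π : Equiv.Perm (Fin (2 * n))) : (Fin n → F4) →+ (Fin (2 * n) → F4) :=
  AddMonoidHom.mk' (fun v => Smap n v ∘ π) fun v w => by rw [Smap_add]; rfl

lemma permSmap_apply (π : Equiv.Perm (Fin (2 * n))) (v : Fin n → F4) (i : Fin (2 * n)) :
    permSmap n π v i = Smap n v (π i) :=
  rfl

lemma permCode_Smap_image (π : Equiv.Perm (Fin (2 * n))) (C : Set (Fin n → F4)) :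
    permCode π (Smap n '' C) = permSmap n π '' C := by
  rw [permCode, Set.image_image]
  rfl

lemma hammingNorm_permSmap (π : Equiv.Perm (Fin (2 * n))) (v : Fin n → F4) :
    hammingNorm (permSmap n π v) = 2 * hammingNorm v :=
  (hammingNorm_comp_equiv _ π).trans (hammingNorm_Smap v)

lemma permSmap_injective (π : Equiv.Perm (Fin (2 * n))) : Injective (permSmap n π) :=
  (injective_iff_map_eq_zero _).2 fun v hv => by
    simpa [hammingNorm_permSmap] using congrArg hammingNorm hv

variable [NeZero n]

lemma Smap_pairIndex_sub_one (v : Fin n → F4) (p : Fin n × Fin 2) :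
    Smap n v (pairIndex n (p - 1)) = Smap n (fun j => v (j - 1) ^ 2) (pairIndex n p) := by
  obtain ⟨j, e⟩ := p
  have hsub : ((j, e) : Fin n × Fin 2) - 1 = (j - 1, e - 1) := rfl
  rw [hsub]
  obtain rfl | rfl : e = 0 ∨ e = 1 := by fin_cases e <;> simp
  · rw [Smap_pairIndex_zero]
    exact Smap_pairIndex_one v (j - 1)
  · rw [Smap_pairIndex_one, F4_sq_sq]
    exact Smap_pairIndex_zero v (j - 1)

variable (n) in
def modPair (i : Fin (2 * n)) : Fin n × Fin 2 := (Fin.ofNat n i, Fin.ofNat 2 i)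

lemma modPair_injective (hodd : Odd n) : Injective (modPair n) := by
  intro i j h
  obtain ⟨hn, h2⟩ := Prod.mk.inj h
  have hmod : (i : ℕ) ≡ j [MOD 2 * n] :=
    (Nat.modEq_and_modEq_iff_modEq_mul (Nat.coprime_two_left.mpr hodd)).1
      ⟨congrArg Fin.val h2, congrArg Fin.val hn⟩
  exact Fin.ext (hmod.eq_of_lt_of_lt i.isLt j.isLt)

lemma modPair_sub_one (i : Fin (2 * n)) : modPair n (i - 1) = modPair n i - 1 :=
  Prod.ext (Fin.ofNat_val_sub_one_of_dvd (dvd_mul_left n 2) i)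
    (Fin.ofNat_val_sub_one_of_dvd (dvd_mul_right 2 n) i)

/-- Position `i` of the interleaved code carries `v (i mod n)`, conjugated `i mod 2` times. -/
noncomputable def interleavePerm (hodd : Odd n) : Equiv.Perm (Fin (2 * n)) :=
  Equiv.ofBijective (pairIndex n ∘ modPair n)
    (Finite.injective_iff_bijective.1 ((pairIndex n).injective.comp (modPair_injective hodd)))

lemma interleavePerm_apply (hodd : Odd n) (i : Fin (2 * n)) :
    interleavePerm hodd i = pairIndex n (modPair n i) :=
  rfl

lemma permSmap_interleavePerm_shift (hodd : Odd n) (v : Fin n → F4) :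
    (fun i => permSmap n (interleavePerm hodd) v (i - 1))
      = permSmap n (interleavePerm hodd) (fun j => v (j - 1) ^ 2) := by
  funext i
  rw [permSmap_apply, permSmap_apply, interleavePerm_apply, interleavePerm_apply, modPair_sub_one,
    Smap_pairIndex_sub_one]

end interleave

/-- Let `n` be odd and `C ⊆ F4^n` an `F4`-linear skew-cyclic code of
dimension `k` and minimum distance `d`.  Then some coordinate permutation of `S(C)`
is an additive cyclic code of length `2n` with `2^{2k}` codewords and minimum
distance `2d`. -/
theorem Smap_skewCyclic_odd_equiv_additive_cyclic (n k d : ℕ) [NeZero n] (hodd : Odd n)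
    (C : Submodule F4 (Fin n → F4))
    (hskew : ∀ v ∈ C, (fun i : Fin n => (v (i - 1)) ^ 2) ∈ C)
    (hk : Module.finrank F4 C = k)
    (hd : minWt (C : Set (Fin n → F4)) = d) :
    ∃ π : Equiv.Perm (Fin (2 * n)),
      (0 : Fin (2 * n) → F4) ∈ permCode π (Smap n '' (C : Set (Fin n → F4))) ∧
      (∀ u ∈ permCode π (Smap n '' (C : Set (Fin n → F4))),
        ∀ w ∈ permCode π (Smap n '' (C : Set (Fin n → F4))),
          u + w ∈ permCode π (Smap n '' (C : Set (Fin n → F4)))) ∧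
      (∀ u ∈ permCode π (Smap n '' (C : Set (Fin n → F4))),
          -u ∈ permCode π (Smap n '' (C : Set (Fin n → F4)))) ∧
      (∀ w ∈ permCode π (Smap n '' (C : Set (Fin n → F4))),
          (fun i : Fin (2 * n) => w (i - 1)) ∈
            permCode π (Smap n '' (C : Set (Fin n → F4)))) ∧
      (permCode π (Smap n '' (C : Set (Fin n → F4)))).ncard = 2 ^ (2 * k) ∧
      minWt (permCode π (Smap n '' (C : Set (Fin n → F4)))) = 2 * d := by
  set π := interleavePerm hodd
  have hcode : permCode π (Smap n '' (C : Set (Fin n → F4)))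
      = (C.toAddSubgroup.map (permSmap n π) : Set (Fin (2 * n) → F4)) := by
    rw [permCode_Smap_image, AddSubgroup.coe_map]
    rfl
  refine ⟨π, ?_⟩
  simp only [hcode, SetLike.mem_coe]
  refine ⟨zero_mem _, fun u hu w hw => add_mem hu hw, fun u hu => neg_mem hu, ?_, ?_, ?_⟩
  · rintro _ ⟨v, hv, rfl⟩
    exact ⟨_, hskew v hv, (permSmap_interleavePerm_shift hodd v).symm⟩
  · rw [AddSubgroup.coe_map, Set.ncard_image_of_injective _ (permSmap_injective π),
      Submodule.coe_toAddSubgroup, ← Nat.card_coe_set_eq, SetLike.coe_sort_coe,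
      Module.natCard_eq_pow_finrank (K := F4), F4_natCard, hk, pow_mul]
    norm_num
  · rw [AddSubgroup.coe_map, Submodule.coe_toAddSubgroup,
      minWt_image two_ne_zero _ (hammingNorm_permSmap π), hd]
end

section
/- Let n ≥ 1 and let C ⊆ F4^n be an additive code such that C^⊥_tr contains no codewords of Hamming weight 1 (i.e., d(C^⊥_tr) ≥ 2). Then the trace-Hermitian dual S(C)^⊥_tr ⊆ F4^{2n} has minimum distance exactly 2: it contains no nonzero codeword of weight 1, and contains at least one codeword of weight 2. -/
/-- The trace Hermitian inner product `⟨u,v⟩_tr = Σᵢ (uᵢ vᵢ² + uᵢ² vᵢ)` on `F4^m`. -/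
noncomputable def trInner {m : ℕ} (u v : Fin m → F4) : F4 :=
  ∑ i, (u i * (v i) ^ 2 + (u i) ^ 2 * v i)

/-- The trace-Hermitian dual of a code `C ⊆ F4^m`. -/
noncomputable def trDual {m : ℕ} (C : Set (Fin m → F4)) : Set (Fin m → F4) :=
  {u | ∀ v ∈ C, trInner u v = 0}

lemma F4_card : Fintype.card F4 = 4 := by
  have h := GaloisField.card 2 2 (by norm_num)
  rwa [Nat.card_eq_fintype_card] at h

lemma F4_pow_four (x : F4) : x ^ 4 = x := by
  have h := FiniteField.pow_card x
  rwa [F4_card] at h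

lemma F4_add_self (x : F4) : x + x = 0 := by
  have : (2 : F4) = 0 := by
    have := CharP.cast_eq_zero F4 2
    exact_mod_cast this
  calc x + x = 2 * x := by ring
  _ = 0 := by rw [this, zero_mul]

/-- If `u` is supported on a single index `j`, then `trInner u v` is the `j`-th term. -/
lemma trInner_single {m : ℕ} (j : Fin m) (c : F4) (v : Fin m → F4) :
    trInner (fun i => if i = j then c else 0) v = c * (v j) ^ 2 + c ^ 2 * v j := by
  unfold trInner
  rw [Finset.sum_eq_single j]
  · simp
  · intro i _ hij
    simp [hij]
  · simp

lemma hammingNorm_single {m : ℕ} (j : Fin m) (c : F4) (hc : c ≠ 0) :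
    hammingNorm (fun i => if i = j then c else 0) = 1 := by
  unfold hammingNorm
  have : ({i | (fun i => if i = j then c else 0) i ≠ 0} : Finset (Fin m)) = {j} := by
    ext i
    by_cases h : i = j <;> simp [h, hc]
  rw [this, Finset.card_singleton]

/-- Let `n ≥ 1` and let `C ⊆ F4^n` be an additive code whose
trace-Hermitian dual has no codewords of weight `1` (i.e. `d(C^⊥_tr) ≥ 2`).  Then
`S(C)^⊥_tr ⊆ F4^{2n}` has minimum distance exactly `2`: it has no codeword of
weight `1`, and it contains a codeword of weight `2`. -/
theorem minDist_trDual_Smap_eq_two (n : ℕ) (hn : 1 ≤ n) (C : AddSubgroup (Fin n → F4))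
    (h1 : ∀ u ∈ trDual (C : Set (Fin n → F4)), hammingNorm u ≠ 1) :
    minWt (trDual (Smap n '' (C : Set (Fin n → F4)))) = 2 ∧
    (∀ u ∈ trDual (Smap n '' (C : Set (Fin n → F4))), hammingNorm u ≠ 1) ∧
    (∃ u ∈ trDual (Smap n '' (C : Set (Fin n → F4))), hammingNorm u = 2) := by
  have h2n : 2 ≤ 2 * n := by omega
  -- no weight-1 codeword in the dual of the image
  have hno1 : ∀ u ∈ trDual (Smap n '' (C : Set (Fin n → F4))), hammingNorm u ≠ 1 := by
    intro u hu hw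
    -- u is supported at a single j
    obtain ⟨j, hj⟩ := Finset.card_eq_one.mp hw
    have hmem : ∀ i : Fin (2 * n), u i ≠ 0 ↔ i = j := by
      intro i
      have := Finset.ext_iff.mp hj i
      simpa using this
    have huj : u j ≠ 0 := (hmem j).mpr rfl
    have huz : ∀ i, i ≠ j → u i = 0 := by
      intro i hij
      by_contra h
      exact hij ((hmem i).mp h)
    set k : Fin n := ⟨j.val / 2, by have := j.isLt; omega⟩ with hk
    set c : F4 := if j.val % 2 = 0 then u j else (u j) ^ 2 with hc
    have hcne : c ≠ 0 := by
      rw [hc]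
      split
      · exact huj
      · exact pow_ne_zero 2 huj
    -- the single-supported vector e is in the dual of C
    have he : (fun i => if i = k then c else 0) ∈ trDual (C : Set (Fin n → F4)) := by
      intro v hv
      rw [trInner_single]
      have hSu : trInner u (Smap n v) = 0 := hu (Smap n v) ⟨v, hv, rfl⟩
      have hterm : trInner u (Smap n v) =
          u j * (Smap n v j) ^ 2 + (u j) ^ 2 * Smap n v j := by
        unfold trInner
        rw [Finset.sum_eq_single j]
        · intro i _ hij
          rw [huz i hij]; ring
        · intro h; exact absurd (Finset.mem_univ j) h
      rw [hterm] at hSu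
      by_cases hpar : j.val % 2 = 0
      · have hSj : Smap n v j = v k := by
          unfold Smap; rw [if_pos hpar]
        rw [hSj] at hSu
        rw [hc, if_pos hpar]
        exact hSu
      · have hSj : Smap n v j = (v k) ^ 2 := by
          unfold Smap; rw [if_neg hpar]
        rw [hSj] at hSu
        rw [hc, if_neg hpar]
        have h4 : (v k) ^ 4 = v k := F4_pow_four (v k)
        rw [show ((v k) ^ 2) ^ 2 = (v k) ^ 4 from by ring, h4] at hSu
        rw [show ((u j) ^ 2) ^ 2 = (u j) ^ 4 from by ring, F4_pow_four]
        linear_combination hSu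
    have := h1 _ he
    exact this (hammingNorm_single k c hcne)
  -- the weight-2 codeword
  set i0 : Fin (2 * n) := ⟨0, by omega⟩ with hi0
  set i1 : Fin (2 * n) := ⟨1, by omega⟩ with hi1
  have hne01 : i0 ≠ i1 := by
    intro h
    have := congrArg Fin.val h
    simp [hi0, hi1] at this
  set u2 : Fin (2 * n) → F4 := fun i => if i = i0 ∨ i = i1 then 1 else 0 with hu2
  have hu2mem : u2 ∈ trDual (Smap n '' (C : Set (Fin n → F4))) := by
    rintro w ⟨v, hv, rfl⟩
    unfold trInner
    have hsub : ∑ i : Fin (2 * n), (u2 i * (Smap n v i) ^ 2 + (u2 i) ^ 2 * Smap n v i)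
        = ∑ i ∈ ({i0, i1} : Finset (Fin (2 * n))),
            (u2 i * (Smap n v i) ^ 2 + (u2 i) ^ 2 * Smap n v i) := by
      refine (Finset.sum_subset (Finset.subset_univ _) ?_).symm
      intro i _ hi
      have : u2 i = 0 := by
        rw [hu2]
        simp only [Finset.mem_insert, Finset.mem_singleton] at hi
        push_neg at hi
        simp [hi.1, hi.2]
      rw [this]; ring
    rw [hsub, Finset.sum_pair hne01]
    have h0 : u2 i0 = 1 := by simp [hu2]
    have h1' : u2 i1 = 1 := by simp [hu2]
    have hS0 : Smap n v i0 = v ⟨0, by omega⟩ := by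
      unfold Smap
      norm_num [hi0]
    have hS1 : Smap n v i1 = (v ⟨0, by omega⟩) ^ 2 := by
      unfold Smap
      norm_num [hi1]
    rw [h0, h1', hS0, hS1]
    set x := v (⟨0, by omega⟩ : Fin n)
    have h4 : x ^ 4 = x := F4_pow_four x
    have hx : (1 : F4) * x ^ 2 + 1 ^ 2 * x + (1 * (x ^ 2) ^ 2 + 1 ^ 2 * x ^ 2)
        = (x ^ 2 + x ^ 2) + (x + x) := by rw [show (x^2)^2 = x^4 by ring, h4]; ring
    rw [hx, F4_add_self, F4_add_self, add_zero]
  have hu2norm : hammingNorm u2 = 2 := by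
    unfold hammingNorm
    have : ({i | u2 i ≠ 0} : Finset (Fin (2 * n))) = {i0, i1} := by
      ext i
      by_cases h : i = i0 ∨ i = i1
      · rcases h with h | h <;> simp [hu2, h]
      · push_neg at h
        simp [hu2, h.1, h.2]
    rw [this, Finset.card_pair hne01]
  refine ⟨?_, hno1, u2, hu2mem, hu2norm⟩
  -- minWt = 2
  have hu2ne : u2 ≠ 0 := by
    intro h
    have := congrFun h i0
    simp [hu2] at this
  have h2mem : 2 ∈ {r : ℕ | ∃ v ∈ trDual (Smap n '' (C : Set (Fin n → F4))),
      v ≠ 0 ∧ r = hammingNorm v} := ⟨u2, hu2mem, hu2ne, hu2norm.symm⟩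
  have hle : sInf {r : ℕ | ∃ v ∈ trDual (Smap n '' (C : Set (Fin n → F4))),
      v ≠ 0 ∧ r = hammingNorm v} ≤ 2 := Nat.sInf_le h2mem
  have hmem := Nat.sInf_mem (⟨2, h2mem⟩ : Set.Nonempty _)
  obtain ⟨v, hv, hvne, hveq⟩ := hmem
  have hv0 : hammingNorm v ≠ 0 := fun h => hvne (hammingNorm_eq_zero.mp h)
  have hv1 : hammingNorm v ≠ 1 := hno1 v hv
  unfold minWt
  omega
end

section
/- Let m ≥ 1 and q = 4^m, and let 1 ≤ k ≤ q. Then there exist F4-linear codes C ⊆ D ⊆ F4^{mq} such that C is the repetition code {λ·(1,1,…,1) : λ ∈ F4} (with parameters [mq, 1, mq]), and D has F4-dimension mk and minimum distance at least q − k + 1. -/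
/-!
Let `L = GF(4^m)`, viewed as an `F4`-vector space `L ≃ F4^m`, and index the `m·4^m` coordinates
by `L × Fin m`. The code `D` is the Reed–Solomon code `{(p(α))_{α ∈ L} : deg p < k}` over `L`,
with every symbol `p(α)` written out in its `m` coordinates over `F4`. A nonzero `p` of degree
`< k` has fewer than `k` roots, so at least `q - k + 1` symbols are nonzero, and each contributes
a nonzero coordinate; since `k ≤ q` this also makes the encoding injective, whence
`dim D = m·k`. The constant polynomial whose value has all coordinates `1` encodes the all-one
word, so the repetition code lies in `D`.
-/

open Finset Polynomial

section Hamming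

variable {ι ι' κ M K : Type*} [Fintype ι] [Zero K] [DecidableEq K]

theorem hammingNorm_comp_equiv_s19 [Fintype ι'] (σ : ι' ≃ ι) (x : ι → K) :
    hammingNorm (x ∘ σ) = hammingNorm x :=
  card_equiv σ (by simp)

theorem hammingNorm_le_hammingNorm_uncurry [Fintype κ] [Zero M] [DecidableEq M]
    (f : M → κ → K) (hf : ∀ a, f a = 0 → a = 0) (x : ι → M) :
    hammingNorm x ≤ hammingNorm fun ij : ι × κ => f (x ij.1) ij.2 := by
  refine card_le_card_of_surjOn Prod.fst fun i hi => ?_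
  obtain ⟨j, hj⟩ : ∃ j, f (x i) j ≠ 0 := by
    by_contra! h
    simp_all [hf _ (funext h)]
  exact ⟨(i, j), by simpa using hj, rfl⟩

theorem hammingNorm_const {a : K} (ha : a ≠ 0) :
    hammingNorm (fun _ : ι => a) = Fintype.card ι := by
  simp [hammingNorm, ha]

end Hamming

theorem Polynomial.card_le_hammingNorm_eval_add_natDegree {R : Type*} [CommRing R] [IsDomain R]
    [Fintype R] [DecidableEq R] {p : R[X]} (hp : p ≠ 0) :
    Fintype.card R ≤ hammingNorm (fun x => p.eval x) + p.natDegree := by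
  have hroots : #{x | p.eval x = 0} ≤ p.natDegree :=
    card_le_degree_of_subset_roots fun x hx => by simp_all
  have hsplit : #{x | p.eval x = 0} + hammingNorm (fun x => p.eval x) = Fintype.card R :=
    card_filter_add_card_filter_not _
  omega

section Concatenation

variable {K L ι κ : Type*} [Field K] [Field L] [Algebra K L]

noncomputable def concatEval (φ : L ≃ₗ[K] (κ → K)) (σ : ι ≃ L × κ) : L[X] →ₗ[K] (ι → K) where
  toFun p i := φ (p.eval (σ i).1) (σ i).2
  map_add' p q := by ext; simp
  map_smul' c p := by ext; simp

noncomputable def concatRS (φ : L ≃ₗ[K] (κ → K)) (σ : ι ≃ L × κ) (k : ℕ) :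
    Submodule K (ι → K) :=
  ((degreeLT L k).restrictScalars K).map (concatEval φ σ)

variable (φ : L ≃ₗ[K] (κ → K)) (σ : ι ≃ L × κ) {k : ℕ}

theorem span_one_le_concatRS (hk : 1 ≤ k) : K ∙ (1 : ι → K) ≤ concatRS φ σ k := by
  rw [Submodule.span_singleton_le_iff_mem]
  refine ⟨C (φ.symm 1), mem_degreeLT.mpr ?_, ?_⟩
  · exact degree_C_le.trans_lt (by exact_mod_cast hk)
  · ext i; simp [concatEval]

variable [Fintype ι] [Fintype κ] [Fintype L] [DecidableEq L] [DecidableEq K]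

theorem card_sub_add_one_le_hammingNorm_concatEval (hk : k ≤ Fintype.card L) {p : L[X]}
    (hp : p ∈ degreeLT L k) (hp0 : p ≠ 0) :
    Fintype.card L - k + 1 ≤ hammingNorm (concatEval φ σ p) := by
  have hdeg : p.natDegree < k := (natDegree_lt_iff_degree_lt hp0).mpr (mem_degreeLT.mp hp)
  calc Fintype.card L - k + 1 ≤ hammingNorm fun x => p.eval x := by
        have := card_le_hammingNorm_eval_add_natDegree hp0
        omega
    _ ≤ hammingNorm fun xj : L × κ => φ (p.eval xj.1) xj.2 :=
        hammingNorm_le_hammingNorm_uncurry (fun a => φ a) (fun a => by simp) _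
    _ = hammingNorm (concatEval φ σ p) := (hammingNorm_comp_equiv_s19 σ _).symm

theorem finrank_concatRS (hk : k ≤ Fintype.card L) :
    Module.finrank K (concatRS φ σ k) = Module.finrank K L * k := by
  have hinj :
      Function.Injective ((concatEval φ σ).domRestrict ((degreeLT L k).restrictScalars K)) := by
    rw [← LinearMap.ker_eq_bot, LinearMap.ker_eq_bot']
    rintro ⟨p, hp⟩ hEp
    by_contra hp0
    have := card_sub_add_one_le_hammingNorm_concatEval φ σ hk hp (by simpa using hp0)
    simp_all
  have hdegLT : Module.finrank L (degreeLT L k) = k := by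
    rw [(degreeLTEquiv L k).finrank_eq, Module.finrank_fin_fun]
  rw [concatRS, ← LinearMap.range_domRestrict, LinearMap.finrank_range_of_inj hinj]
  calc _ = Module.finrank K L * Module.finrank L (degreeLT L k) :=
        (Module.finrank_mul_finrank K L _).symm
    _ = _ := by rw [hdegLT]

end Concatenation

section MinWt

variable {n : ℕ} {C : Set (Fin n → F4)}

theorem minWt_le {v : Fin n → F4} (hv : v ∈ C) (hv0 : v ≠ 0) : minWt C ≤ hammingNorm v :=
  Nat.sInf_le ⟨v, hv, hv0, rfl⟩

theorem le_minWt {d : ℕ} (hC : ∃ v ∈ C, v ≠ 0) (h : ∀ v ∈ C, v ≠ 0 → d ≤ hammingNorm v) :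
    d ≤ minWt C := by
  obtain ⟨v, hv, hv0⟩ := hC
  exact le_csInf ⟨_, v, hv, hv0, rfl⟩ fun _ ⟨w, hw, hw0, hr⟩ => hr ▸ h w hw hw0

end MinWt

theorem coe_span_one_eq_setOf_const {K ι : Type*} [Field K] :
    ((K ∙ (1 : ι → K)) : Set (ι → K)) = {w | ∃ a : K, w = fun _ => a} := by
  ext w
  simp only [SetLike.mem_coe, Submodule.mem_span_singleton, Set.mem_ofPred_eq, eq_comm (a := w)]
  exact exists_congr fun a => by rw [show a • (1 : ι → K) = fun _ => a by ext; simp]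

theorem minWt_repetition {n : ℕ} [NeZero n] :
    minWt {w : Fin n → F4 | ∃ a : F4, w = fun _ => a} = n := by
  have hweight {a : F4} (ha : a ≠ 0) : hammingNorm (fun _ : Fin n => a) = n := by
    rw [hammingNorm_const ha, Fintype.card_fin]
  refine le_antisymm ?_ (le_minWt ⟨1, ⟨1, rfl⟩, one_ne_zero⟩ ?_)
  · refine (minWt_le ?_ one_ne_zero).trans (hweight one_ne_zero).le
    exact ⟨1, rfl⟩
  · rintro _ ⟨a, rfl⟩ ha
    exact (hweight fun h => ha (by rw [h]; rfl)).ge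

/-- Let `m ≥ 1`, `q = 4^m`, `1 ≤ k ≤ q`.  Then there are nested
`F4`-linear codes `C ⊆ D ⊆ F4^{mq}` where `C` is the repetition code
`{λ·(1,…,1) : λ ∈ F4}` (with parameters `[mq, 1, mq]`), and `D` has `F4`-dimension
`mk` and minimum distance at least `q − k + 1`. -/
theorem exists_nested_codes_from_concatenated_RS (m k : ℕ) (hm : 1 ≤ m)
    (hk1 : 1 ≤ k) (hkq : k ≤ 4 ^ m) :
    ∃ C D : Submodule F4 (Fin (m * 4 ^ m) → F4),
      C ≤ D ∧
      (C : Set (Fin (m * 4 ^ m) → F4)) =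
        {w : Fin (m * 4 ^ m) → F4 | ∃ lam : F4, w = fun _ => lam} ∧
      Module.finrank F4 C = 1 ∧
      minWt (C : Set (Fin (m * 4 ^ m) → F4)) = m * 4 ^ m ∧
      Module.finrank F4 D = m * k ∧
      4 ^ m - k + 1 ≤ minWt (D : Set (Fin (m * 4 ^ m) → F4)) := by
  classical
  have : NeZero m := ⟨by omega⟩
  have : NeZero (m * 4 ^ m) := ⟨by positivity⟩
  let L := FiniteField.Extension F4 2 m
  let _ : Fintype L := Fintype.ofFinite L
  have hL : Fintype.card L = 4 ^ m := by
    rw [Fintype.card_eq_nat_card, FiniteField.natCard_extension, GaloisField.card 2 2 two_ne_zero]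
    norm_num
  have hLrank : Module.finrank F4 L = m := FiniteField.finrank_extension F4 2 m
  let φ : L ≃ₗ[F4] (Fin m → F4) := LinearEquiv.ofFinrankEq _ _ (by simp [hLrank])
  let σ : Fin (m * 4 ^ m) ≃ L × Fin m := Fintype.equivOfCardEq (by simp [hL, mul_comm])
  refine ⟨F4 ∙ 1, concatRS φ σ k, span_one_le_concatRS φ σ hk1, coe_span_one_eq_setOf_const,
    finrank_span_singleton one_ne_zero, ?_, ?_, ?_⟩
  · rw [coe_span_one_eq_setOf_const, minWt_repetition]
  · rw [finrank_concatRS φ σ (hL ▸ hkq), hLrank]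
  · refine le_minWt ⟨1, span_one_le_concatRS φ σ hk1 (Submodule.mem_span_singleton_self 1),
      one_ne_zero⟩ ?_
    rintro _ ⟨p, hp, rfl⟩ hv0
    have hp0 : p ≠ 0 := by rintro rfl; exact hv0 (map_zero _)
    simpa only [hL] using card_sub_add_one_le_hammingNorm_concatEval φ σ (hL ▸ hkq) hp hp0
end
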